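/- Let A be an R-order, A₀ a hereditary overring of A, and 𝔠 = Ann_R(A₀/A). Then for any A-lattices M, N, every homomorphism in 𝔠²·Hom_A(M, N) factors through a projective A-module; i.e., 𝔠² annihilates the stable Hom group Hom_A(M,N)/P(M,N). -/

import Mathlib

open CategoryTheory Opposite TensorProduct Function

noncomputable section

variable (R : Type) [CommRing R] [IsLocalRing R]
variable (A : Type) [Ring A] [Algebra R A]

/-- `A` is an `R`-order: (with the ambient finiteness/torsion-free instances)
`A` is torsion-free over `R` and semiprime. -/
def IsROrder : Prop :=
  (∀ r ∈ nonZeroDivisors R, ∀ a : A, r • a = 0 → a = 0) ∧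
  (∀ a : A, (∀ x : A, a * x * a = 0) → a = 0)

/-- An object of `ModuleCat A` is an `A`-lattice. -/
def IsLatticeCat (M : ModuleCat.{0} A) : Prop :=
  Module.Finite A M ∧
    ∀ r ∈ nonZeroDivisors R, ∀ m : M, (algebraMap R A r) • m = 0 → m = 0

/-- A plain module is an `A`-lattice. -/
def IsLatticeMod (M : Type) [AddCommGroup M] [Module R M] [Module A M]
    [IsScalarTower R A M] : Prop :=
  Module.Finite A M ∧ ∀ r ∈ nonZeroDivisors R, ∀ m : M, r • m = 0 → m = 0

/-- Vanishing of `Ext^n_A(M,N)`. -/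
def extZero (n : ℕ) (M N : ModuleCat.{0} A) : Prop :=
  Subsingleton (((Ext ℤ (ModuleCat.{0} A) n).obj (op M)).obj N)

/-- L-injective lattice: `Ext¹_A(M, I) = 0` for all lattices `M`. -/
def IsLInjective (I : ModuleCat.{0} A) : Prop :=
  ∀ M : ModuleCat.{0} A, IsLatticeCat R A M → extZero A 1 M I

/-- Indecomposable module. -/
def Indecomp (M : Type) [AddCommGroup M] [Module A M] : Prop :=
  Nontrivial M ∧ ∀ f : M →ₗ[A] M, f ∘ₗ f = f → f = 0 ∨ f = LinearMap.id

/-- Radical of a module: intersection of the maximal submodules. -/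
def radSub (M : Type) [AddCommGroup M] [Module A M] : Submodule A M :=
  sInf {N : Submodule A M | IsCoatom N}

/-- Connectedness: no nontrivial central idempotents. -/
def IsConnectedRing : Prop :=
  ∀ e : A, e * e = e → (∀ x : A, e * x = x * e) → e = 0 ∨ e = 1

/-- Hereditary order: every `A`-lattice is projective. -/
def IsHereditaryOrder : Prop :=
  ∀ (M : Type) [AddCommGroup M] [Module R M] [Module A M] [IsScalarTower R A M],
    IsLatticeMod R A M → Module.Projective A M

/-- Gorenstein: `A` is L-injective as a left `A`-lattice. -/
def IsGorensteinOrder : Prop := IsLInjective R A (ModuleCat.of A A)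

/-- The canonical embedding of a lattice `B` into `B ⊗ K`, `K` the total fraction ring. -/
def embK (B : Type) [AddCommGroup B] [Module R B] [Module A B] [IsScalarTower R A B]
    [SMulCommClass R A B] : B →ₗ[A] B ⊗[R] (FractionRing R) where
  toFun b := b ⊗ₜ (1 : FractionRing R)
  map_add' x y := TensorProduct.add_tmul x y 1
  map_smul' a b := (TensorProduct.smul_tmul' a b 1).symm

variable (B : Type) [AddCommGroup B] [Module R B] [Module A B] [IsScalarTower R A B]
    [SMulCommClass R A B]

/-- `B` viewed inside `B ⊗ K`. -/
def B0 : Submodule A (B ⊗[R] (FractionRing R)) := LinearMap.range (embK R A B)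

/-- `B^𝔯`: the sum of `B` and all of its minimal overmodules inside `B ⊗ K`. -/
def upperB : Submodule A (B ⊗[R] (FractionRing R)) :=
  B0 R A B ⊔ sSup {N : Submodule A (B ⊗[R] (FractionRing R)) | B0 R A B ⋖ N}

end

/-!
Write `χ_c : A₀ → A` for `x ↦ c • x`, an `A`-bimodule map when `c ∈ 𝔠`. Let `A₀N` be the quotient
of `A₀ ⊗[R] N` by the largest `A₀`-submodule killed by `x ⊗ n ↦ χ_{c'}(x) • n`. It is a lattice
over the hereditary `A₀`, hence `A₀`-projective, and `n ↦ 1 ⊗ n` followed by `x ⊗ n ↦ χ_{c'}(x) • n`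
is multiplication by `c'` on `N`. On a finitely generated projective `A₀`-module, a retract of
`A₀ᵏ`, multiplication by `c` factors through `Aᵏ` as `A₀ᵏ → Aᵏ ⊆ A₀ᵏ` by `χ_c` coordinatewise.
So `(c * c') • f` factors through `Aᵏ`.
-/

namespace LinearMap

section

variable {R S V N : Type*} [Semiring R] [Semiring S] [AddCommMonoid V] [Module R V] [Module S V]
  [AddCommMonoid N] [Module R N] (φ : V →ₗ[R] N)

variable (S) in
def kerCore : Submodule S V where
  carrier := {v | ∀ s : S, φ (s • v) = 0}
  add_mem' hv hw s := by rw [smul_add, map_add, hv s, hw s, add_zero]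
  zero_mem' s := by rw [smul_zero, map_zero]
  smul_mem' t v hv s := by rw [smul_smul]; exact hv (s * t)

theorem apply_eq_zero_of_mem_kerCore {v : V} (hv : v ∈ φ.kerCore S) : φ v = 0 := by
  simpa using hv 1

end

variable {R S V N : Type*} [CommRing R] [Ring S] [Algebra R S]
  [AddCommGroup V] [Module R V] [Module S V] [IsScalarTower R S V]
  [AddCommGroup N] [Module R N] (φ : V →ₗ[R] N)

variable (S) in
def kerCoreLift : (V ⧸ φ.kerCore S) →ₗ[R] N :=
  ((φ.kerCore S).restrictScalars R).liftQ φ (fun _ hv => apply_eq_zero_of_mem_kerCore φ hv) ∘ₗ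
    (Submodule.Quotient.restrictScalarsEquiv R (φ.kerCore S)).symm.toLinearMap

theorem torsionFree_quotient_kerCore
    (hN : ∀ r ∈ nonZeroDivisors R, ∀ n : N, r • n = 0 → n = 0) :
    ∀ r ∈ nonZeroDivisors R, ∀ x : V ⧸ φ.kerCore S, r • x = 0 → x = 0 := by
  intro r hr x hx
  induction x using Submodule.Quotient.induction_on with | H v => ?_
  rw [← Submodule.Quotient.mk_smul, Submodule.Quotient.mk_eq_zero] at hx
  rw [Submodule.Quotient.mk_eq_zero]
  intro s
  refine hN r hr _ ?_
  rw [← map_smul, ← smul_comm, hx s]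

end LinearMap

variable {R A A₀ : Type*} [CommRing R] [Ring A] [Ring A₀] [Algebra R A] [Algebra R A₀]

namespace AlgHom

variable (ρ : A →ₐ[R] A₀)

def conductor : Ideal R where
  carrier := {c | ∀ x : A₀, ∃ a : A, c • x = ρ a}
  zero_mem' x := ⟨0, by simp⟩
  add_mem' {c d} hc hd x := by
    obtain ⟨a, ha⟩ := hc x
    obtain ⟨b, hb⟩ := hd x
    exact ⟨a + b, by rw [add_smul, ha, hb, map_add]⟩
  smul_mem' r c hc x := by
    obtain ⟨a, ha⟩ := hc x
    exact ⟨r • a, by rw [smul_eq_mul, mul_smul, ha, map_smul]⟩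

end AlgHom

section ConductorMap

variable {ρ : A →ₐ[R] A₀} (hρ : Injective ρ) {c : R} (hc : c ∈ ρ.conductor)

noncomputable def conductorMap : A₀ →ₗ[R] A :=
  (LinearEquiv.ofInjective ρ.toLinearMap hρ).symm.toLinearMap ∘ₗ
    (c • LinearMap.id).codRestrict (LinearMap.range ρ.toLinearMap)
      (fun x => (hc x).imp fun _ h => h.symm)

@[simp]
theorem apply_conductorMap (x : A₀) : ρ (conductorMap hρ hc x) = c • x :=
  LinearEquiv.ofInjective_symm_apply (f := ρ.toLinearMap) (h := hρ) _

theorem conductorMap_mul_left (a : A) (x : A₀) :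
    conductorMap hρ hc (ρ a * x) = a * conductorMap hρ hc x :=
  hρ <| by simp

theorem conductorMap_mul_right (x : A₀) (a : A) :
    conductorMap hρ hc (x * ρ a) = conductorMap hρ hc x * a :=
  hρ <| by simp

theorem conductorMap_one : conductorMap hρ hc 1 = algebraMap R A c :=
  hρ <| by simp [Algebra.algebraMap_eq_smul_one]

end ConductorMap

theorem exists_pi_factorization_of_mem_conductor {ρ : A →ₐ[R] A₀} (hρ : Injective ρ) {c : R}
    (hc : c ∈ ρ.conductor) (X : Type*) [AddCommGroup X] [Module A X]
    [Module A₀ X] [Module.Finite A₀ X] [Module.Projective A₀ X]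
    (hX : ∀ (a : A) (x : X), a • x = ρ a • x) :
    ∃ (k : ℕ) (g : X →ₗ[A] Fin k → A) (h : (Fin k → A) →ₗ[A] X),
      ∀ x, h (g x) = algebraMap R A c • x := by
  obtain ⟨k, q, s, -, -, hqs⟩ := Module.Finite.exists_comp_eq_id_of_projective A₀ X
  let g : X →ₗ[A] Fin k → A :=
    { toFun x i := conductorMap hρ hc (s x i)
      map_add' x y := by ext i; simp
      map_smul' a x := by ext i; simp [hX, conductorMap_mul_left] }
  let h : (Fin k → A) →ₗ[A] X :=
    { toFun v := q (fun i => ρ (v i))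
      map_add' v w := by rw [← map_add]; congr 1; ext i; simp
      map_smul' a v := by rw [RingHom.id_apply, hX, ← map_smul]; congr 1; ext i; simp }
  refine ⟨k, g, h, fun x => ?_⟩
  have hρg : (fun i => ρ (g x i)) = algebraMap R A₀ c • s x := by
    ext i; simp [g, Algebra.smul_def]
  change q (fun i => ρ (g x i)) = _
  rw [hρg, map_smul, ← LinearMap.comp_apply, hqs, LinearMap.id_apply, hX, AlgHom.commutes]

section OverLattice

variable {ρ : A →ₐ[R] A₀} (hρ : Injective ρ) {c : R} (hc : c ∈ ρ.conductor)
variable (N : Type*) [AddCommGroup N] [Module R N] [Module A N] [IsScalarTower R A N]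

noncomputable def conductorAction : A₀ ⊗[R] N →ₗ[R] N :=
  TensorProduct.lift ((Algebra.lsmul R R N).toLinearMap ∘ₗ conductorMap hρ hc)

variable {N}

@[simp]
theorem conductorAction_tmul (x : A₀) (n : N) :
    conductorAction hρ hc N (x ⊗ₜ n) = conductorMap hρ hc x • n := rfl

theorem conductorAction_algHom_smul (a : A) (y : A₀ ⊗[R] N) :
    conductorAction hρ hc N (ρ a • y) = a • conductorAction hρ hc N y := by
  induction y using TensorProduct.induction_on with
  | zero => simp
  | tmul x n => simp [TensorProduct.smul_tmul', conductorMap_mul_left, mul_smul]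
  | add y z hy hz => simp only [smul_add, map_add, hy, hz]

theorem one_tmul_smul_sub_mem_kerCore (a : A) (n : N) :
    1 ⊗ₜ (a • n) - ρ a ⊗ₜ n ∈ (conductorAction hρ hc N).kerCore A₀ := by
  intro s
  rw [smul_sub, map_sub, TensorProduct.smul_tmul', TensorProduct.smul_tmul', smul_eq_mul,
    smul_eq_mul, mul_one, conductorAction_tmul, conductorAction_tmul, conductorMap_mul_right,
    mul_smul, sub_self]

variable (N)

abbrev OverLattice := (A₀ ⊗[R] N) ⧸ (conductorAction hρ hc N).kerCore A₀

noncomputable instance : Module A (OverLattice hρ hc N) :=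
  Module.compHom _ (ρ : A →+* A₀)

noncomputable def toOverLattice : N →ₗ[A] OverLattice hρ hc N where
  toFun n := Submodule.Quotient.mk (1 ⊗ₜ n)
  map_add' n n' := by rw [TensorProduct.tmul_add, Submodule.Quotient.mk_add]
  map_smul' a n := by
    change _ = (ρ a • Submodule.Quotient.mk _ : OverLattice hρ hc N)
    rw [← Submodule.Quotient.mk_smul, Submodule.Quotient.eq, TensorProduct.smul_tmul', smul_eq_mul,
      mul_one]
    exact one_tmul_smul_sub_mem_kerCore hρ hc a n

noncomputable def fromOverLattice : OverLattice hρ hc N →ₗ[A] N where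
  __ := (conductorAction hρ hc N).kerCoreLift A₀
  map_smul' a x := by
    induction x using Submodule.Quotient.induction_on with | H y => ?_
    exact conductorAction_algHom_smul hρ hc a y

theorem fromOverLattice_toOverLattice (n : N) :
    fromOverLattice hρ hc N (toOverLattice hρ hc N n) = c • n := by
  change conductorAction hρ hc N (1 ⊗ₜ n) = c • n
  rw [conductorAction_tmul, conductorMap_one, algebraMap_smul]

end OverLattice

section Statements

variable (R : Type) [CommRing R] [IsNoetherianRing R] [IsLocalRing R] [IsReduced R]
  [IsAdicComplete (IsLocalRing.maximalIdeal R) R]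
variable (A : Type) [Ring A] [Algebra R A] [Module.Finite R A]

/-- If `A₀` is a hereditary overring of `A` and
`𝔠 = Ann_R(A₀/A)`, then for `c, c' ∈ 𝔠` every map `(c·c')•f : M → N` of `A`-lattices
factors through a finitely generated projective `A`-module. -/
theorem conductor_sq_kills_stable_hom
    (A₀ : Type) [Ring A₀] [Algebra R A₀]
    (ρ : A →ₐ[R] A₀) (hρ : Function.Injective ρ)
    (hher : ∀ (X : Type) [AddCommGroup X] [Module R X] [Module A₀ X]
      [IsScalarTower R A₀ X], IsLatticeMod R A₀ X → Module.Projective A₀ X)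
    (M N : Type) [AddCommGroup M] [Module A M]
    [AddCommGroup N] [Module R N] [Module A N] [IsScalarTower R A N]
    (hNlat : IsLatticeMod R A N)
    (c c' : R) (hc : ∀ x : A₀, ∃ a : A, c • x = ρ a) (hc' : ∀ x : A₀, ∃ a : A, c' • x = ρ a)
    (f : M →ₗ[A] N) :
    ∃ (P : Type) (_ : AddCommGroup P) (_ : Module A P),
      Module.Projective A P ∧ Module.Finite A P ∧
      ∃ (g : M →ₗ[A] P) (h : P →ₗ[A] N), ∀ x : M, h (g x) = (c * c') • f x := by
  replace hc : c ∈ ρ.conductor := hc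
  replace hc' : c' ∈ ρ.conductor := hc'
  obtain ⟨_, hNtf⟩ := hNlat
  have : Module.Finite R N := .trans A N
  have : Module.Projective A₀ (OverLattice hρ hc' N) :=
    hher _ ⟨inferInstance, LinearMap.torsionFree_quotient_kerCore _ hNtf⟩
  obtain ⟨k, g, h, hgh⟩ :=
    exists_pi_factorization_of_mem_conductor hρ hc (OverLattice hρ hc' N) fun _ _ => rfl
  refine ⟨Fin k → A, _, _, inferInstance, inferInstance, g ∘ₗ toOverLattice hρ hc' N ∘ₗ f,
    fromOverLattice hρ hc' N ∘ₗ h, fun m => ?_⟩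
  simp [hgh, fromOverLattice_toOverLattice, mul_smul]

end Statements
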